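/- Let κ be regular and let P be a partial order such that the square P × P is κ-cc. If T is a tree of height κ all of whose levels have size less than κ, and b₀, b₁ are distinct cofinal branches of T, then the set of pairs of conditions deciding different values along the branches yields an antichain in P × P of size κ; consequently a κ-cc-squared forcing cannot add a cofinal branch to a κ-tree. Formally: if T is a κ-tree in the ground model and P × P is κ-cc, then any cofinal branch of T in a P-generic extension already lies in the ground model. -/

import Mathlib

open Cardinal

universe u

/-- Two conditions are compatible if they have a common lower bound. -/
def Compat {P : Type u} [Preorder P] (a b : P) : Prop := ∃ c, c ≤ a ∧ c ≤ b

/-- A partial order is κ-cc if every antichain has cardinality less than κ. -/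
def IsCC (κ : Cardinal.{u}) (P : Type u) [Preorder P] : Prop :=
  ∀ A : Set P, (∀ a ∈ A, ∀ b ∈ A, a ≠ b → ¬ Compat a b) → #A < κ

/-- A κ-tree: a partial order in which the set of predecessors of every node is
well-ordered (witnessed by the level function `lvl`), of height κ, with all
levels of size less than κ. -/
structure KTree (κ : Cardinal.{u}) where
  carrier : Type u
  po : PartialOrder carrier
  lvl : carrier → Ordinal.{u}
  lvl_lt : ∀ t, lvl t < κ.ord
  lvl_strictMono : ∀ s t, po.lt s t → lvl s < lvl t
  preds : ∀ t, ∀ β < lvl t, ∃! s, po.lt s t ∧ lvl s = β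
  levels_nonempty : ∀ β < κ.ord, ∃ t, lvl t = β
  levels_small : ∀ β, #{t // lvl t = β} < κ

/-- A cofinal branch: a chain of the tree meeting every level. -/
def IsCofBranch {κ : Cardinal.{u}} (S : KTree κ) (b : Set S.carrier) : Prop :=
  (∀ s ∈ b, ∀ t ∈ b, S.po.le s t ∨ S.po.le t s) ∧ ∀ β < κ.ord, ∃ t ∈ b, S.lvl t = β

/-- A `P`-name for a cofinal branch of the tree `S`: `F p t` states that the
condition `p` forces `t` to belong to the named branch. Stronger conditions
force more, any condition forces the named object to be a chain, and densely
many conditions force some node of each level into the branch. -/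
structure BranchName (P : Type u) [Preorder P] {κ : Cardinal.{u}} (S : KTree κ) where
  F : P → S.carrier → Prop
  mono : ∀ p q t, p ≤ q → F q t → F p t
  forcesChain : ∀ p s t, F p s → F p t → S.po.le s t ∨ S.po.le t s
  cof : ∀ p : P, ∀ β < κ.ord, ∃ q, q ≤ p ∧ ∃ t, S.lvl t = β ∧ F q t

/-!
If some `q ≤ p` has no two extensions forcing incomparable nodes into the branch, the nodes
forced by extensions of `q` already form a cofinal branch of the ground model. Otherwise, for
every level `δ < κ` there are conditions `q₀, q₁` forcing a common node on level `δ` but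
distinct nodes on some level `β(δ) < κ`. Regularity of `κ` gives levels `δ_α` (`α < κ`) with `β(δ_γ) < δ_α` for
`γ < α`, and the pairs `(q₀, q₁)` chosen at these levels are pairwise incompatible in `P × P`:
a common extension of two of them would force two distinct nodes of level `β(δ_γ)` below one node
of level `δ_α`. This is a `κ`-sized antichain.
-/

open Set

theorem Compat.symm {P : Type u} [Preorder P] {a b : P} (h : Compat a b) : Compat b a :=
  let ⟨c, hca, hcb⟩ := h
  ⟨c, hcb, hca⟩

theorem IsCC.exists_compat {κ : Cardinal.{u}} {Q : Type u} [Preorder Q] (hcc : IsCC κ Q)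
    (g : Ordinal.{u} → Q) : ∃ γ α, γ < α ∧ α < κ.ord ∧ Compat (g γ) (g α) := by
  by_contra! h
  have hinj : InjOn g (Iio κ.ord) := by
    intro γ hγ α hα hg
    by_contra hne
    rcases lt_or_gt_of_ne hne with hlt | hlt
    · exact h γ α hlt hα ⟨g γ, le_rfl, hg.le⟩
    · exact h α γ hlt hγ ⟨g α, le_rfl, hg.ge⟩
  have hanti : ∀ a ∈ g '' Iio κ.ord, ∀ b ∈ g '' Iio κ.ord, a ≠ b → ¬ Compat a b := by
    rintro _ ⟨γ, hγ, rfl⟩ _ ⟨α, hα, rfl⟩ hne hc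
    rcases lt_trichotomy γ α with hlt | rfl | hlt
    · exact h γ α hlt hα hc
    · exact hne rfl
    · exact h α γ hlt hγ hc.symm
  have hcard : #(g '' Iio κ.ord) = κ := by
    simpa [mk_Iio_ordinal] using mk_image_eq_of_injOn_lift g _ hinj
  exact (hcc _ hanti).ne hcard

namespace Ordinal

noncomputable def succSupSeq (f : Ordinal.{u} → Ordinal.{u}) (α : Ordinal.{u}) : Ordinal.{u} :=
  ⨆ γ : Iio α, f (succSupSeq f γ) + 1
termination_by α
decreasing_by exact γ.2

theorem succSupSeq_eq (f : Ordinal.{u} → Ordinal.{u}) (α : Ordinal.{u}) :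
    succSupSeq f α = ⨆ γ : Iio α, f (succSupSeq f γ) + 1 := by
  rw [succSupSeq]

theorem apply_succSupSeq_lt (f : Ordinal.{u} → Ordinal.{u}) {γ α : Ordinal.{u}} (h : γ < α) :
    f (succSupSeq f γ) < succSupSeq f α := by
  rw [succSupSeq_eq f α]
  exact lt_iSup_add_one (fun γ : Iio α => f (succSupSeq f γ)) ⟨γ, h⟩

theorem succSupSeq_lt_ord {κ : Cardinal.{u}} (hκ : κ.IsRegular) {f : Ordinal.{u} → Ordinal.{u}}
    (hf : ∀ δ < κ.ord, f δ < κ.ord) {α : Ordinal.{u}} (hα : α < κ.ord) :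
    succSupSeq f α < κ.ord := by
  induction α using WellFoundedLT.induction with
  | _ α ih =>
    rw [succSupSeq_eq]
    refine lift_iSup_add_one_lt_of_lt_cof ?_ fun γ => hf _ (ih γ γ.2 (γ.2.trans hα))
    rw [Cardinal.mk_Iio_ordinal, ← lift_cof, hκ.cof_ord, Cardinal.lift_lift, Cardinal.lift_lt]
    exact lt_ord.mp hα

end Ordinal

namespace KTree

variable {κ : Cardinal.{u}} (S : KTree κ)

instance instPartialOrder : PartialOrder S.carrier := S.po

variable {S} {s t u : S.carrier}

theorem eq_of_le_of_lvl_eq (h : s ≤ t) (hl : S.lvl s = S.lvl t) : s = t := by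
  by_contra hne
  exact (S.lvl_strictMono s t (h.lt_of_ne hne)).ne hl

theorem eq_of_lt_of_lt_of_lvl_eq (hs : s < u) (ht : t < u) (hl : S.lvl s = S.lvl t) : s = t :=
  (S.preds u _ (S.lvl_strictMono s u hs)).unique ⟨hs, rfl⟩ ⟨ht, hl.symm⟩

theorem lt_of_lt_of_lt_of_lvl_lt (hs : s < u) (ht : t < u) (hl : S.lvl s < S.lvl t) : s < t := by
  obtain ⟨w, ⟨hwt, hw⟩, -⟩ := S.preds t _ hl
  rwa [← eq_of_lt_of_lt_of_lvl_eq (hwt.trans ht) hs hw]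

theorem le_total_of_le_of_le (hs : s ≤ u) (ht : t ≤ u) : s ≤ t ∨ t ≤ s := by
  rcases hs.eq_or_lt with rfl | hs
  · exact Or.inr ht
  rcases ht.eq_or_lt with rfl | ht
  · exact Or.inl hs.le
  rcases lt_trichotomy (S.lvl s) (S.lvl t) with hl | hl | hl
  · exact Or.inl (lt_of_lt_of_lt_of_lvl_lt hs ht hl).le
  · exact Or.inl (eq_of_lt_of_lt_of_lvl_eq hs ht hl).le
  · exact Or.inr (lt_of_lt_of_lt_of_lvl_lt ht hs hl).le

end KTree

namespace BranchName

variable {P : Type u} [Preorder P] {κ : Cardinal.{u}} {S : KTree κ} (N : BranchName P S)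

theorem le_of_lvl_le {p : P} {s t : S.carrier} (hs : N.F p s) (ht : N.F p t)
    (hl : S.lvl s ≤ S.lvl t) : s ≤ t := by
  rcases N.forcesChain p s t hs ht with h | h
  · exact h
  · rcases h.eq_or_lt with rfl | hlt
    · exact le_rfl
    · exact absurd hl (S.lvl_strictMono t s hlt).not_ge

def SplitsBelow (q : P) : Prop :=
  ∃ q₀ ≤ q, ∃ q₁ ≤ q, ∃ t₀ t₁, N.F q₀ t₀ ∧ N.F q₁ t₁ ∧ ¬ (t₀ ≤ t₁ ∨ t₁ ≤ t₀)

def AgreeAt (q₀ q₁ : P) (δ : Ordinal.{u}) : Prop :=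
  ∃ w, S.lvl w = δ ∧ N.F q₀ w ∧ N.F q₁ w

def DisagreeAt (q₀ q₁ : P) (β : Ordinal.{u}) : Prop :=
  ∃ u v, u ≠ v ∧ S.lvl u = β ∧ S.lvl v = β ∧ N.F q₀ u ∧ N.F q₁ v

theorem isCofBranch_of_not_splitsBelow {q : P} (h : ¬ N.SplitsBelow q) :
    IsCofBranch S {t | ∃ r ≤ q, N.F r t} := by
  refine ⟨?_, fun β hβ => ?_⟩
  · rintro s ⟨r, hr, hs⟩ t ⟨r', hr', ht⟩
    by_contra hst
    exact h ⟨r, hr, r', hr', s, t, hs, ht, hst⟩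
  · obtain ⟨r, hr, t, ht, hF⟩ := N.cof q β hβ
    exact ⟨t, ⟨r, hr, hF⟩, ht⟩

theorem not_compat_of_disagreeAt_of_agreeAt {q₀ q₁ q₀' q₁' : P} {β δ : Ordinal.{u}}
    (hd : N.DisagreeAt q₀ q₁ β) (ha : N.AgreeAt q₀' q₁' δ) (hβδ : β ≤ δ) :
    ¬ Compat (q₀, q₁) (q₀', q₁') := by
  obtain ⟨u, v, huv, hu, hv, hFu, hFv⟩ := hd
  obtain ⟨w, hw, hFw₀, hFw₁⟩ := ha
  rintro ⟨⟨r₀, r₁⟩, ⟨hr₀, hr₁⟩, ⟨hr₀', hr₁'⟩⟩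
  have huw : u ≤ w :=
    N.le_of_lvl_le (N.mono _ _ _ hr₀ hFu) (N.mono _ _ _ hr₀' hFw₀) (by rwa [hu, hw])
  have hvw : v ≤ w :=
    N.le_of_lvl_le (N.mono _ _ _ hr₁ hFv) (N.mono _ _ _ hr₁' hFw₁) (by rwa [hv, hw])
  rcases KTree.le_total_of_le_of_le huw hvw with h | h
  · exact huv (KTree.eq_of_le_of_lvl_eq h (hu.trans hv.symm))
  · exact huv (KTree.eq_of_le_of_lvl_eq h (hv.trans hu.symm)).symm

theorem exists_agreeAt_disagreeAt {p : P} (hsplit : ∀ q ≤ p, N.SplitsBelow q) {δ : Ordinal.{u}}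
    (hδ : δ < κ.ord) : ∃ q₀ q₁, N.AgreeAt q₀ q₁ δ ∧ ∃ β < κ.ord, N.DisagreeAt q₀ q₁ β := by
  obtain ⟨q, hqp, w, hw, hFw⟩ := N.cof p δ hδ
  obtain ⟨q₀', hq₀', q₁', hq₁', t₀, t₁, hF₀, hF₁, hinc⟩ := hsplit q hqp
  have hM : max (S.lvl t₀) (S.lvl t₁) < κ.ord := max_lt (S.lvl_lt t₀) (S.lvl_lt t₁)
  obtain ⟨q₀, hq₀, u, hu, hFu⟩ := N.cof q₀' _ hM
  obtain ⟨q₁, hq₁, v, hv, hFv⟩ := N.cof q₁' _ hM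
  refine ⟨q₀, q₁, ⟨w, hw, N.mono _ _ _ (hq₀.trans hq₀') hFw, N.mono _ _ _ (hq₁.trans hq₁') hFw⟩,
    _, hM, u, v, ?_, hu, hv, hFu, hFv⟩
  -- `u` and `v` lie above `t₀` and `t₁`, which are incomparable
  rintro rfl
  have h₀ : t₀ ≤ u := N.le_of_lvl_le (N.mono _ _ _ hq₀ hF₀) hFu (hu ▸ le_max_left _ _)
  have h₁ : t₁ ≤ u := N.le_of_lvl_le (N.mono _ _ _ hq₁ hF₁) hFv (hu ▸ le_max_right _ _)
  exact hinc (KTree.le_total_of_le_of_le h₀ h₁)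

theorem exists_le_not_splitsBelow (hκ : κ.IsRegular) (hcc : IsCC κ (P × P)) (p : P) :
    ∃ q ≤ p, ¬ N.SplitsBelow q := by
  by_contra! hsplit
  have : Nonempty P := ⟨p⟩
  choose! Q₀ Q₁ hagree β hβ hdisagree using
    fun δ (hδ : δ < κ.ord) => N.exists_agreeAt_disagreeAt hsplit hδ
  let e := Ordinal.succSupSeq β
  have he : ∀ α < κ.ord, e α < κ.ord := fun α hα => Ordinal.succSupSeq_lt_ord hκ hβ hα
  obtain ⟨γ, α, hγα, hα, hcompat⟩ := hcc.exists_compat fun α => (Q₀ (e α), Q₁ (e α))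
  exact N.not_compat_of_disagreeAt_of_agreeAt (hdisagree _ (he γ (hγα.trans hα)))
    (hagree _ (he α hα)) (Ordinal.apply_succSupSeq_lt β hγα).le hcompat

end BranchName

/-- The square-cc branch lemma: if `P × P` is κ-cc and `T` is a κ-tree in the
ground model, then any cofinal branch of `T` in a `P`-generic extension already
lies in the ground model, i.e. below any condition there is a condition forcing
the named branch to be contained in a ground-model cofinal branch. -/
theorem square_cc_no_new_branch {κ : Cardinal.{u}} (hreg : κ.IsRegular)
    {P : Type u} [PartialOrder P] (hcc : IsCC κ (P × P))
    (S : KTree κ) (N : BranchName P S) :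
    ∀ p : P, ∃ q, q ≤ p ∧ ∃ b : Set S.carrier, IsCofBranch S b ∧
      ∀ r, r ≤ q → ∀ t, N.F r t → t ∈ b := by
  intro p
  obtain ⟨q, hqp, hq⟩ := N.exists_le_not_splitsBelow hreg hcc p
  exact ⟨q, hqp, _, N.isCofBranch_of_not_splitsBelow hq, fun r hr t ht => ⟨r, hr, ht⟩⟩
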